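/- Let λ, μ ∈ ℝ with λ + μ = 1/2. Define the pairing of a λ-density and a μ-density on S^{1|1}, in the pair model, by ⟨F, G⟩ = ∫₀^{2π} ( f₀ g₁ + f₁ g₀ ) dx for F = (f₀, f₁) and G = (g₀, g₁). Then this pairing is K(1)-invariant: for every homogeneous pair H, every homogeneous pair F and every pair G, ⟨𝔏^λ_H(F), G⟩ + (−1)^{|H||F|} ⟨F, 𝔏^μ_H(G)⟩ = 0. (This is the invariant bilinear form of Proposition 9.1 in the case n = 1, obtained by composing the product of densities with the Berezin integral.) -/

import Mathlib

open Real Function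

/-- Model of C^∞(S^{1|1}): a pair (f₀, f₁) represents f₀(x) + θ f₁(x). -/
abbrev SPair : Type := (ℝ → ℝ) × (ℝ → ℝ)

/-- The odd vector field η̄ = ∂_θ − θ∂ₓ acting on pairs. -/
noncomputable def D (F : SPair) : SPair :=
  (F.2, fun x => -deriv F.1 x)

/-- Product of super functions: (f₀ + θf₁)(g₀ + θg₁) = f₀g₀ + θ(f₀g₁ + f₁g₀). -/
def pmul (F G : SPair) : SPair :=
  (fun x => F.1 x * G.1 x, fun x => F.1 x * G.2 x + F.2 x * G.1 x)

/-- Membership in the model: both components smooth and 2π-periodic. -/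
def InModel (F : SPair) : Prop :=
  ContDiff ℝ (⊤ : ℕ∞) F.1 ∧ ContDiff ℝ (⊤ : ℕ∞) F.2 ∧
    Periodic F.1 (2 * π) ∧ Periodic F.2 (2 * π)

/-- F is homogeneous of parity p: even (p = 0) iff odd part vanishes,
odd (p = 1) iff even part vanishes. -/
def IsHom (F : SPair) (p : ℕ) : Prop :=
  (p = 0 ∧ F.2 = 0) ∨ (p = 1 ∧ F.1 = 0)

/-- The super binomial coefficient (j choose i)_s. -/
def sbinom (j i : ℕ) : ℕ :=
  if i % 2 = 0 ∨ j % 2 = 1 then Nat.choose (j / 2) (i / 2) else 0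

/-- The Lie derivative 𝔏^λ_F of λ-densities along the contact field X_F,
for F = (f, k) (extended additively from the homogeneous cases). -/
noncomputable def Lder (l : ℝ) (F G : SPair) : SPair :=
  (fun x => F.1 x * deriv G.1 x + l * deriv F.1 x * G.1 x
      + (1 / 2) * F.2 x * G.2 x,
   fun x => F.1 x * deriv G.2 x + (l + 1 / 2) * deriv F.1 x * G.2 x
      + (1 / 2) * F.2 x * deriv G.1 x + l * deriv F.2 x * G.1 x)

/-- The contact bracket {F, G}, extended bilinearly from the homogeneous
component formulas. -/
noncomputable def cbracket (F G : SPair) : SPair :=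
  (fun x => F.1 x * deriv G.1 x - deriv F.1 x * G.1 x
      + (1 / 2) * F.2 x * G.2 x,
   fun x => F.1 x * deriv G.2 x - (1 / 2) * deriv F.1 x * G.2 x
      + (1 / 2) * F.2 x * deriv G.1 x - deriv F.2 x * G.1 x)


lemma int_deriv_periodic (φ : ℝ → ℝ) (hφ : ContDiff ℝ (⊤ : ℕ∞) φ) (hp : Periodic φ (2 * π)) :
    ∫ x in (0 : ℝ)..(2 * π), deriv φ x = 0 := by
  rw [intervalIntegral.integral_deriv_eq_sub
      (fun x _ => (hφ.differentiable (by simp) x))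
      ((hφ.continuous_deriv (by simp)).intervalIntegrable _ _)]
  have h0 := hp 0
  simp only [zero_add] at h0
  rw [h0, sub_self]

/-- The Berezin pairing ⟨F, G⟩ = ∫₀^{2π} (f₀g₁ + f₁g₀) dx between λ- and
μ-densities with λ + μ = 1/2 is K(1)-invariant (Proposition 9.1, n = 1):
⟨𝔏^λ_H F, G⟩ + (−1)^{|H||F|} ⟨F, 𝔏^μ_H G⟩ = 0. -/
theorem stmt13 (l m : ℝ) (hlm : l + m = 1 / 2)
    (H F : SPair) (pH pF : ℕ)
    (hHhom : IsHom H pH) (hHmod : InModel H)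
    (hFhom : IsHom F pF) (hFmod : InModel F)
    (G : SPair) (hGmod : InModel G) :
    (∫ x in (0 : ℝ)..(2 * π),
        ((Lder l H F).1 x * G.2 x + (Lder l H F).2 x * G.1 x))
      + (-1 : ℝ) ^ (pH * pF) *
        (∫ x in (0 : ℝ)..(2 * π),
          (F.1 x * (Lder m H G).2 x + F.2 x * (Lder m H G).1 x)) = 0 := by

  obtain ⟨cH1, cH2, qH1, qH2⟩ := hHmod
  obtain ⟨cF1, cF2, qF1, qF2⟩ := hFmod
  obtain ⟨cG1, cG2, qG1, qG2⟩ := hGmod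
  have cH1' : Continuous (deriv H.1) := cH1.continuous_deriv (by simp)
  have cH2' : Continuous (deriv H.2) := cH2.continuous_deriv (by simp)
  have cF1' : Continuous (deriv F.1) := cF1.continuous_deriv (by simp)
  have cF2' : Continuous (deriv F.2) := cF2.continuous_deriv (by simp)
  have cG1' : Continuous (deriv G.1) := cG1.continuous_deriv (by simp)
  have cG2' : Continuous (deriv G.2) := cG2.continuous_deriv (by simp)
  have cH1c : Continuous H.1 := cH1.continuous
  have cH2c : Continuous H.2 := cH2.continuous
  have cF1c : Continuous F.1 := cF1.continuous
  have cF2c : Continuous F.2 := cF2.continuous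
  have cG1c : Continuous G.1 := cG1.continuous
  have cG2c : Continuous G.2 := cG2.continuous
  have dH1 : ∀ x, HasDerivAt H.1 (deriv H.1 x) x := fun x => (cH1.differentiable (by simp) x).hasDerivAt
  have dH2 : ∀ x, HasDerivAt H.2 (deriv H.2 x) x := fun x => (cH2.differentiable (by simp) x).hasDerivAt
  have dF1 : ∀ x, HasDerivAt F.1 (deriv F.1 x) x := fun x => (cF1.differentiable (by simp) x).hasDerivAt
  have dF2 : ∀ x, HasDerivAt F.2 (deriv F.2 x) x := fun x => (cF2.differentiable (by simp) x).hasDerivAt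
  have dG1 : ∀ x, HasDerivAt G.1 (deriv G.1 x) x := fun x => (cG1.differentiable (by simp) x).hasDerivAt
  have dG2 : ∀ x, HasDerivAt G.2 (deriv G.2 x) x := fun x => (cG2.differentiable (by simp) x).hasDerivAt
  have hi1 : IntervalIntegrable
      (fun x => (Lder l H F).1 x * G.2 x + (Lder l H F).2 x * G.1 x) MeasureTheory.volume 0 (2 * π) := by
    apply Continuous.intervalIntegrable
    unfold Lder
    dsimp only
    exact (((((cH1c.mul cF1').add ((continuous_const.mul cH1').mul cF1c)).add
        ((continuous_const.mul cH2c).mul cF2c)).mul cG2c).add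
      (((((cH1c.mul cF2').add ((continuous_const.mul cH1').mul cF2c)).add
        ((continuous_const.mul cH2c).mul cF1')).add
        ((continuous_const.mul cH2').mul cF1c)).mul cG1c))
  have hi2 : IntervalIntegrable
      (fun x => F.1 x * (Lder m H G).2 x + F.2 x * (Lder m H G).1 x) MeasureTheory.volume 0 (2 * π) := by
    apply Continuous.intervalIntegrable
    unfold Lder
    dsimp only
    exact ((cF1c.mul ((((cH1c.mul cG2').add ((continuous_const.mul cH1').mul cG2c)).add
        ((continuous_const.mul cH2c).mul cG1')).add
        ((continuous_const.mul cH2').mul cG1c))).add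
      (cF2c.mul (((cH1c.mul cG1').add ((continuous_const.mul cH1').mul cG1c)).add
        ((continuous_const.mul cH2c).mul cG2c))))
  have hdz : deriv (0 : ℝ → ℝ) = fun _ => (0 : ℝ) := by
    funext y
    exact deriv_const y 0
  rcases hHhom with ⟨hpH, hH2⟩ | ⟨hpH, hH1⟩
  · -- H even
    subst hpH
    simp only [Nat.zero_mul, pow_zero, one_mul]
    rw [← intervalIntegral.integral_add hi1 hi2]
    set φ : ℝ → ℝ := fun x => H.1 x * (F.1 x * G.2 x + F.2 x * G.1 x) with hφdef
    have hφ : ContDiff ℝ (⊤ : ℕ∞) φ := cH1.mul ((cF1.mul cG2).add (cF2.mul cG1))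
    have hper : Periodic φ (2 * π) := fun x => by
      simp only [hφdef, qH1 x, qF1 x, qF2 x, qG1 x, qG2 x]
    conv_rhs => rw [← int_deriv_periodic φ hφ hper]
    apply intervalIntegral.integral_congr
    intro x _
    have hd : HasDerivAt φ
        (deriv H.1 x * (F.1 x * G.2 x + F.2 x * G.1 x)
          + H.1 x * ((deriv F.1 x * G.2 x + F.1 x * deriv G.2 x)
            + (deriv F.2 x * G.1 x + F.2 x * deriv G.1 x))) x :=
      (dH1 x).mul (((dF1 x).mul (dG2 x)).add ((dF2 x).mul (dG1 x)))
    rw [hd.deriv]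
    simp only [Lder, hH2, hdz, Pi.zero_apply, mul_zero, zero_mul, add_zero, zero_add]
    linear_combination (deriv H.1 x * (F.1 x * G.2 x + F.2 x * G.1 x)) * hlm
  · -- H odd
    subst hpH
    rcases hFhom with ⟨hpF, hF2⟩ | ⟨hpF, hF1⟩
    · -- F even
      subst hpF
      simp only [Nat.mul_zero, pow_zero, one_mul]
      rw [← intervalIntegral.integral_add hi1 hi2]
      set φ : ℝ → ℝ := fun x => (1 / 2) * (H.2 x * (F.1 x * G.1 x)) with hφdef
      have hφ : ContDiff ℝ (⊤ : ℕ∞) φ := contDiff_const.mul (cH2.mul (cF1.mul cG1))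
      have hper : Periodic φ (2 * π) := fun x => by
        simp only [hφdef, qH2 x, qF1 x, qG1 x]
      conv_rhs => rw [← int_deriv_periodic φ hφ hper]
      apply intervalIntegral.integral_congr
      intro x _
      have hd : HasDerivAt φ
          ((1 / 2) * (deriv H.2 x * (F.1 x * G.1 x)
            + H.2 x * (deriv F.1 x * G.1 x + F.1 x * deriv G.1 x))) x :=
        ((dH2 x).mul ((dF1 x).mul (dG1 x))).const_mul (1 / 2)
      rw [hd.deriv]
      simp only [Lder, hH1, hF2, hdz, Pi.zero_apply, mul_zero, zero_mul, add_zero, zero_add]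
      linear_combination (deriv H.2 x * F.1 x * G.1 x) * hlm
    · -- F odd
      subst hpF
      simp only [Nat.mul_one, pow_one]
      have heq : (∫ x in (0 : ℝ)..(2 * π),
          ((Lder l H F).1 x * G.2 x + (Lder l H F).2 x * G.1 x))
          = ∫ x in (0 : ℝ)..(2 * π),
            (F.1 x * (Lder m H G).2 x + F.2 x * (Lder m H G).1 x) := by
        apply intervalIntegral.integral_congr
        intro x _
        simp only [Lder, hH1, hF1, hdz, Pi.zero_apply, mul_zero, zero_mul, add_zero, zero_add]
        ring
      rw [heq]
      ring
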